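/- Let A, B, C, D be finitely based permutation classes, and let F be the horizontal juxtaposition of the vertical juxtaposition of A over C with the vertical juxtaposition of B over D. Then F is finitely based. -/
import Mathlib


/-- A permutation of length `n`, given as a bijection of `Fin n`
(index/value `i` represents the entry `i+1` of `{1,…,n}`). -/
abbrev Perm' := Σ n : ℕ, Equiv.Perm (Fin n)

/-- `Contains σ π` means the pattern `σ` is contained in `π`. -/
def Contains (σ π : Perm') : Prop :=
  ∃ f : Fin σ.1 → Fin π.1, StrictMono f ∧
    ∀ i j : Fin σ.1, σ.2 i < σ.2 j ↔ π.2 (f i) < π.2 (f j)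

/-- A permutation class: a downward-closed set of permutations. -/
def IsPermClass (X : Set Perm') : Prop :=
  ∀ π ∈ X, ∀ σ : Perm', Contains σ π → σ ∈ X

/-- The avoidance set of a set `B` of permutations. -/
def Av (B : Set Perm') : Set Perm' := {π | ∀ β ∈ B, ¬ Contains β π}

/-- A set of permutations is finitely based if it is `Av B` for a finite `B`. -/
def FinitelyBased (X : Set Perm') : Prop := ∃ B : Set Perm', B.Finite ∧ X = Av B

/-- `PatternOn π S σ`: the entries of `π` at the set `S` of indices form a copy of `σ`. -/
def PatternOn (π : Perm') (S : Set (Fin π.1)) (σ : Perm') : Prop :=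
  ∃ f : Fin σ.1 → Fin π.1, StrictMono f ∧ Set.range f = S ∧
    ∀ i j : Fin σ.1, σ.2 i < σ.2 j ↔ π.2 (f i) < π.2 (f j)

/-- `PatternIn π S X`: the pattern of the entries of `π` at positions `S` lies in `X`. -/
def PatternIn (π : Perm') (S : Set (Fin π.1)) (X : Set Perm') : Prop :=
  ∃ σ ∈ X, PatternOn π S σ

/-- The permutation 21. -/
def perm21 : Perm' := ⟨2, Equiv.swap 0 1⟩
/-- The permutation 12. -/
def perm12 : Perm' := ⟨2, Equiv.refl (Fin 2)⟩
/-- The empty permutation. -/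
def emptyPerm : Perm' := ⟨0, Equiv.refl (Fin 0)⟩

/-- The 2×2 grid class `Grid(A,B;C,D)`: `A` top-left, `B` top-right, `C` bottom-left,
`D` bottom-right.  A position `i : Fin n` represents position `i+1`, so "position `≤ v`"
is `(i:ℕ) < v`, and "value `> h`" is `h ≤ (π.2 i : ℕ)`. -/
def GridClass (A B C D : Set Perm') : Set Perm' :=
  {π | ∃ v h : ℕ, v ≤ π.1 ∧ h ≤ π.1 ∧
    PatternIn π {i | (i : ℕ) < v ∧ h ≤ (π.2 i : ℕ)} A ∧
    PatternIn π {i | v ≤ (i : ℕ) ∧ h ≤ (π.2 i : ℕ)} B ∧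
    PatternIn π {i | (i : ℕ) < v ∧ (π.2 i : ℕ) < h} C ∧
    PatternIn π {i | v ≤ (i : ℕ) ∧ (π.2 i : ℕ) < h} D}

/-- Horizontal juxtaposition of `X` (left) and `Y` (right). -/
def HJuxt (X Y : Set Perm') : Set Perm' :=
  {π | ∃ v : ℕ, v ≤ π.1 ∧
    PatternIn π {i | (i : ℕ) < v} X ∧
    PatternIn π {i | v ≤ (i : ℕ)} Y}

/-- Vertical juxtaposition of `X` (top) and `Y` (bottom). -/
def VJuxt (X Y : Set Perm') : Set Perm' :=
  {π | ∃ h : ℕ, h ≤ π.1 ∧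
    PatternIn π {i | h ≤ (π.2 i : ℕ)} X ∧
    PatternIn π {i | (π.2 i : ℕ) < h} Y}

/-- `Squint≤(A,B;C,D)`: divisions `(v, ℓ, r)` with the left h-line `ℓ` no higher
than the right h-line `r`. -/
def SquintLE (A B C D : Set Perm') : Set Perm' :=
  {π | ∃ v l r : ℕ, v ≤ π.1 ∧ l ≤ π.1 ∧ r ≤ π.1 ∧ l ≤ r ∧
    PatternIn π {i | (i : ℕ) < v ∧ l ≤ (π.2 i : ℕ)} A ∧
    PatternIn π {i | (i : ℕ) < v ∧ (π.2 i : ℕ) < l} C ∧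
    PatternIn π {i | v ≤ (i : ℕ) ∧ r ≤ (π.2 i : ℕ)} B ∧
    PatternIn π {i | v ≤ (i : ℕ) ∧ (π.2 i : ℕ) < r} D}

/-- `Squint≥(A,B;C,D)`: divisions `(v, ℓ, r)` with the left h-line `ℓ` no lower
than the right h-line `r`. -/
def SquintGE (A B C D : Set Perm') : Set Perm' :=
  {π | ∃ v l r : ℕ, v ≤ π.1 ∧ l ≤ π.1 ∧ r ≤ π.1 ∧ r ≤ l ∧
    PatternIn π {i | (i : ℕ) < v ∧ l ≤ (π.2 i : ℕ)} A ∧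
    PatternIn π {i | (i : ℕ) < v ∧ (π.2 i : ℕ) < l} C ∧
    PatternIn π {i | v ≤ (i : ℕ) ∧ r ≤ (π.2 i : ℕ)} B ∧
    PatternIn π {i | v ≤ (i : ℕ) ∧ (π.2 i : ℕ) < r} D}

/-- The basis of a set `X`: minimal permutations not in `X`. -/
def PermBasis (X : Set Perm') : Set Perm' :=
  {π | π ∉ X ∧ ∀ σ : Perm', Contains σ π → σ ≠ π → σ ∈ X}

-- #### infrastructure

lemma perm'_eq_empty (ρ : Perm') (h : ρ.1 = 0) : ρ = emptyPerm := by
  obtain ⟨n, p⟩ := ρ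
  subst h
  exact Sigma.ext rfl (heq_of_eq (Subsingleton.elim _ _))

lemma contains_empty (π : Perm') : Contains emptyPerm π :=
  ⟨Fin.elim0, fun a => a.elim0, fun i => i.elim0⟩

lemma contains_trans {σ ρ π : Perm'} (h1 : Contains σ ρ) (h2 : Contains ρ π) :
    Contains σ π := by
  obtain ⟨f, hf, hfv⟩ := h1
  obtain ⟨g, hg, hgv⟩ := h2
  exact ⟨g ∘ f, hg.comp hf, fun i j => (hfv i j).trans (hgv (f i) (f j))⟩

lemma av_isPermClass (B : Set Perm') : IsPermClass (Av B) :=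
  fun π hπ σ hσ β hβ hcon => hπ β hβ (contains_trans hcon hσ)

lemma patternOn_empty {π ρ : Perm'} {S : Set (Fin π.1)} (hS : S = ∅)
    (h : PatternOn π S ρ) : ρ = emptyPerm := by
  obtain ⟨f, -, hr, -⟩ := h
  apply perm'_eq_empty
  by_contra hne
  have : f ⟨0, Nat.pos_of_ne_zero hne⟩ ∈ Set.range f := Set.mem_range_self _
  rw [hr, hS] at this
  exact this

lemma contains_of_patternOn {π α τ : Perm'} {S : Set (Fin π.1)}
    (hα : PatternOn π S α) (h : Fin τ.1 → Fin π.1) (hmono : StrictMono h)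
    (hrange : Set.range h ⊆ S)
    (hval : ∀ i j, τ.2 i < τ.2 j ↔ π.2 (h i) < π.2 (h j)) :
    Contains τ α := by
  obtain ⟨G, hG, hGr, hGv⟩ := hα
  have hex : ∀ i, ∃ j, G j = h i := fun i => by
    have : h i ∈ Set.range G := by rw [hGr]; exact hrange (Set.mem_range_self i)
    exact this
  choose u hu using hex
  refine ⟨u, fun a b hab => ?_, fun i j => ?_⟩
  · have : G (u a) < G (u b) := by rw [hu, hu]; exact hmono hab
    exact hG.lt_iff_lt.mp this
  · rw [hval i j, ← hu i, ← hu j, ← hGv]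

lemma embed_of_contains_patternOn {π ρ β : Perm'} {S : Set (Fin π.1)}
    (hρ : PatternOn π S ρ) (hβ : Contains β ρ) :
    ∃ e : Fin β.1 → Fin π.1, StrictMono e ∧ Set.range e ⊆ S ∧
      ∀ i j, β.2 i < β.2 j ↔ π.2 (e i) < π.2 (e j) := by
  obtain ⟨f, hf, hfr, hfv⟩ := hρ
  obtain ⟨e0, he0, he0v⟩ := hβ
  refine ⟨f ∘ e0, hf.comp he0, ?_, fun i j => (he0v i j).trans (hfv _ _)⟩
  rintro x ⟨i, rfl⟩
  rw [← hfr]; exact Set.mem_range_self _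

open Classical in
lemma exists_patternOn (π : Perm') (S : Set (Fin π.1)) :
    ∃ σ : Perm', PatternOn π S σ ∧ σ.1 = S.ncard := by
  classical
  obtain ⟨n, p⟩ := π
  set s : Finset (Fin n) := S.toFinset with hs
  set k := s.card with hk
  let eS : Fin k ≃o s := s.orderIsoOfFin rfl
  let t : Finset (Fin n) := s.image p
  have ht : t.card = k := by
    rw [Finset.card_image_of_injective s p.injective]
  let eT : Fin k ≃o t := t.orderIsoOfFin ht
  have hmemeq : ∀ x : Fin n, x ∈ s ↔ p x ∈ t := by
    intro x
    simp only [t, Finset.mem_image]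
    constructor
    · exact fun hx => ⟨x, hx, rfl⟩
    · rintro ⟨a, ha, h⟩; rwa [← p.injective h]
  let mid : {x // x ∈ s} ≃ {x // x ∈ t} := (p.subtypeEquiv hmemeq)
  refine ⟨⟨k, (eS.toEquiv.trans mid).trans eT.toEquiv.symm⟩,
    ⟨fun i => (eS i : Fin n), ?_, ?_, ?_⟩, (Set.ncard_eq_toFinset_card' S).symm⟩
  · intro a b hab
    exact Subtype.coe_lt_coe.mpr (eS.lt_iff_lt.mpr hab)
  · apply Set.eq_of_subset_of_subset
    · rintro x ⟨i, rfl⟩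
      exact Set.mem_toFinset.mp (eS i).2
    · intro x hx
      have hxs : x ∈ s := Set.mem_toFinset.mpr hx
      obtain ⟨i, hi⟩ := eS.surjective ⟨x, hxs⟩
      exact ⟨i, by show ↑(eS i) = x; rw [hi]⟩
  · intro i j
    show eT.symm (mid (eS i)) < eT.symm (mid (eS j)) ↔ _
    rw [← eT.symm.lt_iff_lt.symm]
    exact Subtype.coe_lt_coe.symm

lemma finite_len_le (N : ℕ) : {β : Perm' | β.1 ≤ N}.Finite := by
  have hsub : {β : Perm' | β.1 ≤ N} ⊆ ⋃ n ∈ Set.Iic N, Set.range (Sigma.mk n) := by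
    intro β hβ
    exact Set.mem_biUnion hβ ⟨β.2, Sigma.eta β⟩
  exact Set.Finite.subset (Set.Finite.biUnion (Set.finite_Iic N)
    (fun n _ => Set.finite_range _)) hsub

lemma exists_bound_of_finite {S : Set Perm'} (h : S.Finite) :
    ∃ N, ∀ β ∈ S, β.1 ≤ N := by
  obtain ⟨N, hN⟩ := (h.image Sigma.fst).bddAbove
  exact ⟨N, fun β hβ => hN (Set.mem_image_of_mem _ hβ)⟩

lemma finitelyBased_master (X : Set Perm') (hX : IsPermClass X) (N : ℕ)
    (hrec : ∀ π : Perm', (∀ σ, Contains σ π → σ.1 ≤ N → σ ∈ X) → π ∈ X) :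
    FinitelyBased X := by
  refine ⟨{β | β.1 ≤ N ∧ β ∉ X}, (finite_len_le N).subset (fun β hβ => hβ.1), ?_⟩
  ext π
  constructor
  · rintro hπ β ⟨hβN, hβX⟩ hcon
    exact hβX (hX π hπ β hcon)
  · intro hπ
    exact hrec π (fun σ hcon hσN => by_contra fun h => hπ σ ⟨hσN, h⟩ hcon)

lemma mem_iff_lt_card_of_dc {k : ℕ} (s : Finset (Fin k))
    (hdc : ∀ a b : Fin k, a ≤ b → b ∈ s → a ∈ s) (i : Fin k) :
    i ∈ s ↔ (i : ℕ) < s.card := by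
  constructor
  · intro hi
    have hsub : Finset.Iic i ⊆ s := fun j hj => hdc j i (Finset.mem_Iic.mp hj) hi
    have := Finset.card_le_card hsub
    rw [Fin.card_Iic] at this
    omega
  · intro hi
    by_contra hns
    have hsub : s ⊆ Finset.Iio i := by
      intro j hj
      rw [Finset.mem_Iio]
      by_contra hji
      exact hns (hdc i j (le_of_not_gt hji) hj)
    have := Finset.card_le_card hsub
    rw [Fin.card_Iio] at this
    omega

open Classical in
lemma hjuxt_isPermClass {X Y : Set Perm'} (hX : IsPermClass X) (hY : IsPermClass Y) :
    IsPermClass (HJuxt X Y) := by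
  intro π hπ σ hσ
  obtain ⟨v, hv, hL, hR⟩ := hπ
  obtain ⟨f, fmono, fval⟩ := hσ
  set s : Finset (Fin σ.1) := Finset.univ.filter (fun i => (f i : ℕ) < v) with hsdef
  have hdc : ∀ a b : Fin σ.1, a ≤ b → b ∈ s → a ∈ s := by
    intro a b hab hb
    rw [hsdef, Finset.mem_filter] at hb ⊢
    refine ⟨Finset.mem_univ _, lt_of_le_of_lt ?_ hb.2⟩
    exact_mod_cast Fin.le_iff_val_le_val.mp (fmono.monotone hab)
  set v' := s.card with hv'
  have hmem : ∀ i : Fin σ.1, (i : ℕ) < v' ↔ (f i : ℕ) < v := by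
    intro i
    rw [← mem_iff_lt_card_of_dc s hdc i, hsdef, Finset.mem_filter]
    simp
  refine ⟨v', ?_, ?_, ?_⟩
  · calc v' ≤ (Finset.univ : Finset (Fin σ.1)).card := Finset.card_le_card (Finset.filter_subset _ _)
      _ = σ.1 := by simp
  · obtain ⟨ρ, hρ, -⟩ := exists_patternOn σ {i | (i : ℕ) < v'}
    obtain ⟨α, hαX, hαpat⟩ := hL
    obtain ⟨eρ, hemono, herange, heval⟩ := hρ
    refine ⟨ρ, hX α hαX ρ (contains_of_patternOn hαpat (f ∘ eρ) (fmono.comp hemono) ?_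
      (fun i j => (heval i j).trans (fval _ _))), eρ, hemono, herange, heval⟩
    rintro x ⟨i, rfl⟩
    have : eρ i ∈ {i : Fin σ.1 | (i : ℕ) < v'} := herange ▸ Set.mem_range_self i
    exact (hmem (eρ i)).mp this
  · obtain ⟨ρ, hρ, -⟩ := exists_patternOn σ {i | v' ≤ (i : ℕ)}
    obtain ⟨α, hαY, hαpat⟩ := hR
    obtain ⟨eρ, hemono, herange, heval⟩ := hρ
    refine ⟨ρ, hY α hαY ρ (contains_of_patternOn hαpat (f ∘ eρ) (fmono.comp hemono) ?_
      (fun i j => (heval i j).trans (fval _ _))), eρ, hemono, herange, heval⟩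
    rintro x ⟨i, rfl⟩
    have hin : eρ i ∈ {i : Fin σ.1 | v' ≤ (i : ℕ)} := herange ▸ Set.mem_range_self i
    show v ≤ (f (eρ i) : ℕ)
    by_contra hlt
    have h1 := (hmem (eρ i)).mpr (lt_of_not_ge hlt)
    have h2 : v' ≤ ((eρ i) : ℕ) := hin
    omega

open Classical in
lemma vjuxt_isPermClass {X Y : Set Perm'} (hX : IsPermClass X) (hY : IsPermClass Y) :
    IsPermClass (VJuxt X Y) := by
  intro π hπ σ hσ
  obtain ⟨h, hh, hT, hBo⟩ := hπ
  obtain ⟨f, fmono, fval⟩ := hσ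
  set s : Finset (Fin σ.1) := Finset.univ.filter
    (fun j => (π.2 (f (σ.2.symm j)) : ℕ) < h) with hsdef
  have hdc : ∀ a b : Fin σ.1, a ≤ b → b ∈ s → a ∈ s := by
    intro a b hab hb
    rw [hsdef, Finset.mem_filter] at hb ⊢
    refine ⟨Finset.mem_univ _, ?_⟩
    rcases eq_or_lt_of_le hab with rfl | hlt
    · exact hb.2
    · have : σ.2 (σ.2.symm a) < σ.2 (σ.2.symm b) := by
        rw [Equiv.apply_symm_apply, Equiv.apply_symm_apply]; exact hlt
      have := (fval _ _).mp this
      calc (π.2 (f (σ.2.symm a)) : ℕ) ≤ (π.2 (f (σ.2.symm b)) : ℕ) := le_of_lt this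
        _ < h := hb.2
  set h' := s.card with hh'
  have hmem : ∀ i : Fin σ.1, (σ.2 i : ℕ) < h' ↔ (π.2 (f i) : ℕ) < h := by
    intro i
    rw [← mem_iff_lt_card_of_dc s hdc (σ.2 i), hsdef, Finset.mem_filter]
    simp [Equiv.symm_apply_apply]
  refine ⟨h', ?_, ?_, ?_⟩
  · calc h' ≤ (Finset.univ : Finset (Fin σ.1)).card := Finset.card_le_card (Finset.filter_subset _ _)
      _ = σ.1 := by simp
  · obtain ⟨ρ, hρ, -⟩ := exists_patternOn σ {i | h' ≤ (σ.2 i : ℕ)}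
    obtain ⟨α, hαX, hαpat⟩ := hT
    obtain ⟨eρ, hemono, herange, heval⟩ := hρ
    refine ⟨ρ, hX α hαX ρ (contains_of_patternOn hαpat (f ∘ eρ) (fmono.comp hemono) ?_
      (fun i j => (heval i j).trans (fval _ _))), eρ, hemono, herange, heval⟩
    rintro x ⟨i, rfl⟩
    have hin : eρ i ∈ {j : Fin σ.1 | h' ≤ (σ.2 j : ℕ)} := herange ▸ Set.mem_range_self i
    show h ≤ (π.2 (f (eρ i)) : ℕ)
    by_contra hlt
    have := (hmem (eρ i)).mpr (lt_of_not_ge hlt)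
    have hin' : h' ≤ (σ.2 (eρ i) : ℕ) := hin
    omega
  · obtain ⟨ρ, hρ, -⟩ := exists_patternOn σ {i | (σ.2 i : ℕ) < h'}
    obtain ⟨α, hαY, hαpat⟩ := hBo
    obtain ⟨eρ, hemono, herange, heval⟩ := hρ
    refine ⟨ρ, hY α hαY ρ (contains_of_patternOn hαpat (f ∘ eρ) (fmono.comp hemono) ?_
      (fun i j => (heval i j).trans (fval _ _))), eρ, hemono, herange, heval⟩
    rintro x ⟨i, rfl⟩
    have hin : eρ i ∈ {j : Fin σ.1 | (σ.2 j : ℕ) < h'} := herange ▸ Set.mem_range_self i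
    exact (hmem (eρ i)).mp hin

open Classical in
lemma hjuxt_recog (S T : Set Perm') (sN tN : ℕ)
    (hS : ∀ β ∈ S, β.1 ≤ sN) (hT : ∀ β ∈ T, β.1 ≤ tN)
    (π : Perm')
    (hrec : ∀ σ, Contains σ π → σ.1 ≤ sN + tN → σ ∈ HJuxt (Av S) (Av T)) :
    π ∈ HJuxt (Av S) (Av T) := by
  -- emptyPerm lies in Av S and Av T
  have hem : emptyPerm ∈ HJuxt (Av S) (Av T) :=
    hrec emptyPerm (contains_empty π) (Nat.zero_le _)
  obtain ⟨v0, -, ⟨σX, hσXmem, hσXpat⟩, ⟨σY, hσYmem, hσYpat⟩⟩ := hem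
  haveI hie : IsEmpty (Fin emptyPerm.1) := by
    show IsEmpty (Fin 0); infer_instance
  have hemX : emptyPerm ∈ Av S := by
    rwa [patternOn_empty (Set.eq_empty_of_isEmpty _) hσXpat] at hσXmem
  have hemY : emptyPerm ∈ Av T := by
    rwa [patternOn_empty (Set.eq_empty_of_isEmpty _) hσYpat] at hσYmem
  set n := π.1 with hn
  set Good : ℕ → Prop := fun v => ∀ ρ, PatternOn π {i | (i : ℕ) < v} ρ → ρ ∈ Av S
    with hGood
  have good0 : Good 0 := by
    intro ρ hρ
    rw [patternOn_empty (by ext i; simp) hρ]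
    exact hemX
  set v' := Nat.findGreatest Good n with hv'def
  have hGv' : Good v' := Nat.findGreatest_spec (Nat.zero_le n) good0
  have hv'n : v' ≤ n := Nat.findGreatest_le n
  by_cases hcase : ∀ ρ, PatternOn π {i | v' ≤ (i : ℕ)} ρ → ρ ∈ Av T
  · obtain ⟨ρ1, hρ1, -⟩ := exists_patternOn π {i | (i : ℕ) < v'}
    obtain ⟨ρ2, hρ2, -⟩ := exists_patternOn π {i | v' ≤ (i : ℕ)}
    exact ⟨v', hv'n, ⟨ρ1, hGv' ρ1 hρ1, hρ1⟩, ⟨ρ2, hcase ρ2 hρ2, hρ2⟩⟩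
  · push_neg at hcase
    obtain ⟨ρY, hρY, hρYnot⟩ := hcase
    have hτex : ∃ τ ∈ T, Contains τ ρY := by
      by_contra hc
      push_neg at hc
      exact hρYnot (fun β hβ => hc β hβ)
    obtain ⟨τ, hτT, hτρ⟩ := hτex
    obtain ⟨g, gmono, grange, gval⟩ := embed_of_contains_patternOn hρY hτρ
    -- v' < n
    have hv'lt : v' < n := by
      rcases lt_or_eq_of_le hv'n with h | h
      · exact h
      · exfalso
        apply hρYnot
        rw [patternOn_empty (by ext i; simp; omega) hρY]
        exact hemY
    have hnotgood : ¬ Good (v' + 1) :=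
      Nat.findGreatest_is_greatest (Nat.lt_succ_self v') hv'lt
    have hnotgood' : ∃ ρ, PatternOn π {i | (i : ℕ) < v' + 1} ρ ∧ ρ ∉ Av S := by
      by_contra hc
      push_neg at hc
      exact hnotgood (fun ρ h => hc ρ h)
    obtain ⟨ρX, hρX, hρXnot⟩ := hnotgood'
    have hβex : ∃ β ∈ S, Contains β ρX := by
      by_contra hc
      push_neg at hc
      exact hρXnot (fun β hβ => hc β hβ)
    obtain ⟨β, hβS, hβρ⟩ := hβex
    obtain ⟨e, emono, erange, eval⟩ := embed_of_contains_patternOn hρX hβρ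
    -- the β-copy has a point at position v'
    have hi0 : ∃ i0, (e i0 : ℕ) = v' := by
      by_contra hc
      push_neg at hc
      obtain ⟨ρ0, hρ0, -⟩ := exists_patternOn π {i | (i : ℕ) < v'}
      have hρ0X := hGv' ρ0 hρ0
      have hcon : Contains β ρ0 := by
        apply contains_of_patternOn hρ0 e emono ?_ eval
        rintro x ⟨i, rfl⟩
        have hx : e i ∈ {j : Fin π.1 | (j : ℕ) < v' + 1} := erange (Set.mem_range_self i)
        have hx2 : (e i : ℕ) < v' + 1 := hx
        have := hc i
        show (e i : ℕ) < v'
        omega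
      exact hρ0X β hβS hcon
    obtain ⟨i0, hi0⟩ := hi0
    -- combined pattern μ
    set R : Set (Fin π.1) := Set.range e ∪ Set.range g with hR
    obtain ⟨μ, hμpat, hμcard⟩ := exists_patternOn π R
    have hrange_le : ∀ {k : ℕ} (u : Fin k → Fin π.1), (Set.range u).ncard ≤ k := by
      intro k u
      have h1 : (Set.range u).ncard ≤ (Set.univ : Set (Fin k)).ncard := by
        rw [← Set.image_univ]
        exact Set.ncard_image_le (Set.toFinite _)
      rwa [Set.ncard_univ, Nat.card_eq_fintype_card, Fintype.card_fin] at h1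
    have hμlen : μ.1 ≤ sN + tN := by
      rw [hμcard, hR]
      have h1 := Set.ncard_union_le (Set.range e) (Set.range g)
      have h2 := hrange_le e
      have h3 := hrange_le g
      have h4 := hS β hβS
      have h5 := hT τ hτT
      omega
    obtain ⟨F, Fmono, Frange, Fval⟩ := hμpat
    have hμmem : μ ∈ HJuxt (Av S) (Av T) :=
      hrec μ ⟨F, Fmono, Fval⟩ hμlen
    obtain ⟨w, hw, ⟨αX, hαX, hαXpat⟩, ⟨αY, hαY, hαYpat⟩⟩ := hμmem
    -- factor e and g through F
    have hex : ∀ i, ∃ j, F j = e i := fun i => by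
      have : e i ∈ Set.range F := by
        rw [Frange, hR]; exact Or.inl (Set.mem_range_self i)
      exact this
    choose e' he' using hex
    have hgx : ∀ i, ∃ j, F j = g i := fun i => by
      have : g i ∈ Set.range F := by
        rw [Frange, hR]; exact Or.inr (Set.mem_range_self i)
      exact this
    choose g' hg' using hgx
    have e'mono : StrictMono e' := fun a b hab =>
      Fmono.lt_iff_lt.mp (by rw [he', he']; exact emono hab)
    have g'mono : StrictMono g' := fun a b hab =>
      Fmono.lt_iff_lt.mp (by rw [hg', hg']; exact gmono hab)
    have e'val : ∀ i j, β.2 i < β.2 j ↔ μ.2 (e' i) < μ.2 (e' j) := fun i j =>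
      (eval i j).trans (by rw [← he' i, ← he' j]; exact (Fval _ _).symm)
    have g'val : ∀ i j, τ.2 i < τ.2 j ↔ μ.2 (g' i) < μ.2 (g' j) := fun i j =>
      (gval i j).trans (by rw [← hg' i, ← hg' j]; exact (Fval _ _).symm)
    by_cases hsplit : (e' i0 : ℕ) < w
    · -- whole β-copy lies left of w in μ
      have hall : ∀ i, (e' i : ℕ) < w := by
        intro i
        have h1 : (e i : ℕ) < v' + 1 := erange (Set.mem_range_self i)
        have h2 : e i ≤ e i0 := by
          rw [Fin.le_def]; omega
        have h3 : e' i ≤ e' i0 := Fmono.le_iff_le.mp (by rw [he', he']; exact h2)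
        have h4 : (e' i : ℕ) ≤ (e' i0 : ℕ) := h3
        omega
      have hcon : Contains β αX := by
        apply contains_of_patternOn hαXpat e' e'mono ?_ e'val
        rintro x ⟨i, rfl⟩
        exact hall i
      exact absurd hcon (hαX β hβS)
    · -- whole τ-copy lies right of w in μ
      have hall : ∀ j, w ≤ (g' j : ℕ) := by
        intro j
        have h1 : v' ≤ (g j : ℕ) := grange (Set.mem_range_self j)
        have h2 : e i0 ≤ g j := by rw [Fin.le_def]; omega
        have h3 : e' i0 ≤ g' j := Fmono.le_iff_le.mp (by rw [he', hg']; exact h2)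
        have h4 : (e' i0 : ℕ) ≤ (g' j : ℕ) := h3
        omega
      have hcon : Contains τ αY := by
        apply contains_of_patternOn hαYpat g' g'mono ?_ g'val
        rintro x ⟨j, rfl⟩
        exact hall j
      exact absurd hcon (hαY τ hτT)

open Classical in
lemma vjuxt_recog (S T : Set Perm') (sN tN : ℕ)
    (hS : ∀ β ∈ S, β.1 ≤ sN) (hT : ∀ β ∈ T, β.1 ≤ tN)
    (π : Perm')
    (hrec : ∀ σ, Contains σ π → σ.1 ≤ sN + tN → σ ∈ VJuxt (Av S) (Av T)) :
    π ∈ VJuxt (Av S) (Av T) := by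
  have hem : emptyPerm ∈ VJuxt (Av S) (Av T) :=
    hrec emptyPerm (contains_empty π) (Nat.zero_le _)
  obtain ⟨h0, -, ⟨σX, hσXmem, hσXpat⟩, ⟨σY, hσYmem, hσYpat⟩⟩ := hem
  haveI hie : IsEmpty (Fin emptyPerm.1) := by
    show IsEmpty (Fin 0); infer_instance
  have hemX : emptyPerm ∈ Av S := by
    rwa [patternOn_empty (Set.eq_empty_of_isEmpty _) hσXpat] at hσXmem
  have hemY : emptyPerm ∈ Av T := by
    rwa [patternOn_empty (Set.eq_empty_of_isEmpty _) hσYpat] at hσYmem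
  set n := π.1 with hn
  set Good : ℕ → Prop := fun h => ∀ ρ, PatternOn π {i | (π.2 i : ℕ) < h} ρ → ρ ∈ Av T
    with hGood
  have good0 : Good 0 := by
    intro ρ hρ
    rw [patternOn_empty (by ext i; simp) hρ]
    exact hemY
  set h' := Nat.findGreatest Good n with hh'def
  have hGh' : Good h' := Nat.findGreatest_spec (Nat.zero_le n) good0
  have hh'n : h' ≤ n := Nat.findGreatest_le n
  by_cases hcase : ∀ ρ, PatternOn π {i | h' ≤ (π.2 i : ℕ)} ρ → ρ ∈ Av S
  · obtain ⟨ρ1, hρ1, -⟩ := exists_patternOn π {i | h' ≤ (π.2 i : ℕ)}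
    obtain ⟨ρ2, hρ2, -⟩ := exists_patternOn π {i | (π.2 i : ℕ) < h'}
    exact ⟨h', hh'n, ⟨ρ1, hcase ρ1 hρ1, hρ1⟩, ⟨ρ2, hGh' ρ2 hρ2, hρ2⟩⟩
  · push_neg at hcase
    obtain ⟨ρX, hρX, hρXnot⟩ := hcase
    have hβex : ∃ β ∈ S, Contains β ρX := by
      by_contra hc
      push_neg at hc
      exact hρXnot (fun β hβ => hc β hβ)
    obtain ⟨sβ, hsβS, hsβρ⟩ := hβex
    obtain ⟨g, gmono, grange, gval⟩ := embed_of_contains_patternOn hρX hsβρ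
    have hh'lt : h' < n := by
      rcases lt_or_eq_of_le hh'n with h | h
      · exact h
      · exfalso
        apply hρXnot
        rw [patternOn_empty (by ext i; simp; have := (π.2 i).isLt; omega) hρX]
        exact hemX
    have hnotgood : ¬ Good (h' + 1) :=
      Nat.findGreatest_is_greatest (Nat.lt_succ_self h') hh'lt
    have hnotgood' : ∃ ρ, PatternOn π {i | (π.2 i : ℕ) < h' + 1} ρ ∧ ρ ∉ Av T := by
      by_contra hc
      push_neg at hc
      exact hnotgood (fun ρ h => hc ρ h)
    obtain ⟨ρB, hρB, hρBnot⟩ := hnotgood'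
    have hτex : ∃ τ ∈ T, Contains τ ρB := by
      by_contra hc
      push_neg at hc
      exact hρBnot (fun β hβ => hc β hβ)
    obtain ⟨tτ, htτT, htτρ⟩ := hτex
    obtain ⟨e, emono, erange, eval⟩ := embed_of_contains_patternOn hρB htτρ
    -- the copy of tτ has a point at height h'
    have hi0 : ∃ i0, (π.2 (e i0) : ℕ) = h' := by
      by_contra hc
      push_neg at hc
      obtain ⟨ρ0, hρ0, -⟩ := exists_patternOn π {i | (π.2 i : ℕ) < h'}
      have hρ0T := hGh' ρ0 hρ0
      have hcon : Contains tτ ρ0 := by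
        apply contains_of_patternOn hρ0 e emono ?_ eval
        rintro x ⟨i, rfl⟩
        have hx : (π.2 (e i) : ℕ) < h' + 1 := erange (Set.mem_range_self i)
        have := hc i
        show (π.2 (e i) : ℕ) < h'
        omega
      exact hρ0T tτ htτT hcon
    obtain ⟨i0, hi0⟩ := hi0
    set R : Set (Fin π.1) := Set.range e ∪ Set.range g with hR
    obtain ⟨μ, hμpat, hμcard⟩ := exists_patternOn π R
    have hrange_le : ∀ {k : ℕ} (u : Fin k → Fin π.1), (Set.range u).ncard ≤ k := by
      intro k u
      have h1 : (Set.range u).ncard ≤ (Set.univ : Set (Fin k)).ncard := by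
        rw [← Set.image_univ]
        exact Set.ncard_image_le (Set.toFinite _)
      rwa [Set.ncard_univ, Nat.card_eq_fintype_card, Fintype.card_fin] at h1
    have hμlen : μ.1 ≤ sN + tN := by
      rw [hμcard, hR]
      have h1 := Set.ncard_union_le (Set.range e) (Set.range g)
      have h2 := hrange_le e
      have h3 := hrange_le g
      have h4 := hS sβ hsβS
      have h5 := hT tτ htτT
      omega
    obtain ⟨F, Fmono, Frange, Fval⟩ := hμpat
    have hμmem : μ ∈ VJuxt (Av S) (Av T) :=
      hrec μ ⟨F, Fmono, Fval⟩ hμlen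
    obtain ⟨w, hw, ⟨αX, hαX, hαXpat⟩, ⟨αY, hαY, hαYpat⟩⟩ := hμmem
    have hex : ∀ i, ∃ j, F j = e i := fun i => by
      have : e i ∈ Set.range F := by
        rw [Frange, hR]; exact Or.inl (Set.mem_range_self i)
      exact this
    choose e' he' using hex
    have hgx : ∀ i, ∃ j, F j = g i := fun i => by
      have : g i ∈ Set.range F := by
        rw [Frange, hR]; exact Or.inr (Set.mem_range_self i)
      exact this
    choose g' hg' using hgx
    have e'mono : StrictMono e' := fun a b hab =>
      Fmono.lt_iff_lt.mp (by rw [he', he']; exact emono hab)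
    have g'mono : StrictMono g' := fun a b hab =>
      Fmono.lt_iff_lt.mp (by rw [hg', hg']; exact gmono hab)
    have e'val : ∀ i j, tτ.2 i < tτ.2 j ↔ μ.2 (e' i) < μ.2 (e' j) := fun i j =>
      (eval i j).trans (by rw [← he' i, ← he' j]; exact (Fval _ _).symm)
    have g'val : ∀ i j, sβ.2 i < sβ.2 j ↔ μ.2 (g' i) < μ.2 (g' j) := fun i j =>
      (gval i j).trans (by rw [← hg' i, ← hg' j]; exact (Fval _ _).symm)
    have Fle : ∀ a b, μ.2 a ≤ μ.2 b ↔ π.2 (F a) ≤ π.2 (F b) := by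
      intro a b
      rw [← not_lt, ← not_lt, not_iff_not]
      exact Fval b a
    by_cases hsplit : w ≤ (μ.2 (e' i0) : ℕ)
    · -- whole sβ-copy lies above w in μ
      have hall : ∀ j, w ≤ (μ.2 (g' j) : ℕ) := by
        intro j
        have h1 : h' ≤ (π.2 (g j) : ℕ) := grange (Set.mem_range_self j)
        have h2 : π.2 (e i0) ≤ π.2 (g j) := by rw [Fin.le_def]; omega
        have h3 : μ.2 (e' i0) ≤ μ.2 (g' j) := by
          rw [Fle, he', hg']; exact h2
        have h4 : (μ.2 (e' i0) : ℕ) ≤ (μ.2 (g' j) : ℕ) := h3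
        omega
      have hcon : Contains sβ αX := by
        apply contains_of_patternOn hαXpat g' g'mono ?_ g'val
        rintro x ⟨j, rfl⟩
        exact hall j
      exact absurd hcon (hαX sβ hsβS)
    · -- whole tτ-copy lies below w in μ
      have hall : ∀ i, (μ.2 (e' i) : ℕ) < w := by
        intro i
        have h1 : (π.2 (e i) : ℕ) < h' + 1 := erange (Set.mem_range_self i)
        have h2 : π.2 (e i) ≤ π.2 (e i0) := by rw [Fin.le_def]; omega
        have h3 : μ.2 (e' i) ≤ μ.2 (e' i0) := by
          rw [Fle, he', he']; exact h2
        have h4 : (μ.2 (e' i) : ℕ) ≤ (μ.2 (e' i0) : ℕ) := h3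
        omega
      have hcon : Contains tτ αY := by
        apply contains_of_patternOn hαYpat e' e'mono ?_ e'val
        rintro x ⟨i, rfl⟩
        exact hall i
      exact absurd hcon (hαY tτ htτT)

lemma hjuxt_fb {S T : Set Perm'} (hSf : S.Finite) (hTf : T.Finite) :
    FinitelyBased (HJuxt (Av S) (Av T)) := by
  obtain ⟨sN, hS⟩ := exists_bound_of_finite hSf
  obtain ⟨tN, hT⟩ := exists_bound_of_finite hTf
  exact finitelyBased_master _ (hjuxt_isPermClass (av_isPermClass S) (av_isPermClass T))
    (sN + tN) (fun π h => hjuxt_recog S T sN tN hS hT π h)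

lemma vjuxt_fb {S T : Set Perm'} (hSf : S.Finite) (hTf : T.Finite) :
    FinitelyBased (VJuxt (Av S) (Av T)) := by
  obtain ⟨sN, hS⟩ := exists_bound_of_finite hSf
  obtain ⟨tN, hT⟩ := exists_bound_of_finite hTf
  exact finitelyBased_master _ (vjuxt_isPermClass (av_isPermClass S) (av_isPermClass T))
    (sN + tN) (fun π h => vjuxt_recog S T sN tN hS hT π h)


/-- For finitely based permutation classes `A,B,C,D`, the horizontal
juxtaposition of the vertical juxtapositions `A` over `C` and `B` over `D` is
finitely based. -/
theorem hjuxt_vjuxt_finitelyBased (A B C D : Set Perm')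
    (hA : IsPermClass A) (hB : IsPermClass B)
    (hC : IsPermClass C) (hD : IsPermClass D)
    (hAfb : FinitelyBased A) (hBfb : FinitelyBased B)
    (hCfb : FinitelyBased C) (hDfb : FinitelyBased D) :
    FinitelyBased (HJuxt (VJuxt A C) (VJuxt B D)) := by
  obtain ⟨SA, hSA, rfl⟩ := hAfb
  obtain ⟨SB, hSB, rfl⟩ := hBfb
  obtain ⟨SC, hSC, rfl⟩ := hCfb
  obtain ⟨SD, hSD, rfl⟩ := hDfb
  obtain ⟨SU, hSU, hUeq⟩ := vjuxt_fb hSA hSC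
  obtain ⟨SV, hSV, hVeq⟩ := vjuxt_fb hSB hSD
  rw [hUeq, hVeq]
  exact hjuxt_fb hSU hSV
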